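/- arXiv:1611.06630 — 3 statements merged into one kernel-verified Lean document; each statement's English description precedes it below -/
import Mathlib

section
/- For real s > 1 and every positive integer q, Σ_{n=1}^∞ c_q(n)/n^s = ζ(s)·q^{1-s}·Π_{p | q}(1 − p^{s-1}), i.e., (1/ζ(s))·Σ_{n=1}^∞ c_q(n)/n^s = Σ_{d|q} d^{1-s} μ(q/d). -/
/-!
Expanding `c_q(n) = ∑_{d ∣ (q, n)} μ(q/d) d` and writing `n = d m`, the partial sum up to `x` is the
finite combination `∑_{d ∣ q} d^{1-s} μ(q/d) ∑_{m ≤ x/d} m^{-s}`; letting `x → ∞` in each of the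
finitely many inner sums gives `ζ(s) ∑_{d ∣ q} d^{1-s} μ(q/d)`.
-/

open Finset Filter Topology

/-- The Ramanujan sum. -/
noncomputable def ramanujanSum (q n : ℕ) : ℤ :=
  ∑ d ∈ (Nat.gcd q n).divisors, ArithmeticFunction.moebius (q / d) * d

theorem tendsto_sum_Icc_one_tsum_pnat {α : Type*} [AddCommMonoid α] [TopologicalSpace α]
    {f : ℕ → α} (hf : Summable fun n : ℕ+ => f n) :
    Tendsto (fun x : ℕ => ∑ n ∈ Icc 1 x, f n) atTop (𝓝 (∑' n : ℕ+, f n)) := by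
  have h := (summable_pnat_iff_summable_succ.mp hf).hasSum.tendsto_sum_nat
  rw [← tsum_pnat_eq_tsum_succ] at h
  refine h.congr fun x => ?_
  rw [← Ico_add_one_right_eq_Icc, sum_Ico_eq_sum_range]
  simp [add_comm]

theorem Nat.sum_Icc_filter_dvd {M : Type*} [AddCommMonoid M] (g : ℕ → M) {d : ℕ} (hd : d ≠ 0)
    (x : ℕ) : ∑ n ∈ Icc 1 x with d ∣ n, g n = ∑ m ∈ Icc 1 (x / d), g (d * m) := by
  have hd0 : 0 < d := Nat.pos_of_ne_zero hd
  have hmultiples :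
      {n ∈ Icc 1 x | d ∣ n} = (Icc 1 (x / d)).map ⟨(d * ·), mul_right_injective₀ hd⟩ := by
    ext n
    simp only [mem_filter, mem_Icc, Finset.mem_map, Function.Embedding.coeFn_mk,
      Nat.le_div_iff_mul_le hd0]
    constructor
    · rintro ⟨⟨hn1, hnx⟩, m, rfl⟩
      exact ⟨m, ⟨Nat.pos_of_ne_zero (by rintro rfl; simp at hn1), by linarith [mul_comm d m]⟩, rfl⟩
    · rintro ⟨m, ⟨hm1, hmx⟩, rfl⟩
      exact ⟨⟨Nat.one_le_iff_ne_zero.mpr (mul_ne_zero hd (by omega)), by linarith [mul_comm d m]⟩,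
        dvd_mul_right d m⟩
  rw [hmultiples, sum_map]
  rfl

theorem ramanujanSum_eq_sum_divisors_filter_dvd (q n : ℕ) :
    ramanujanSum q n = ∑ d ∈ q.divisors with d ∣ n, ArithmeticFunction.moebius (q / d) * d := by
  rcases eq_or_ne q 0 with rfl | hq
  · simp [ramanujanSum]
  rw [ramanujanSum, ← Nat.divisors_filter_dvd_of_dvd hq (Nat.gcd_dvd_left q n)]
  refine sum_congr ?_ fun _ _ => rfl
  ext d
  simp +contextual [Nat.dvd_gcd_iff, Nat.dvd_of_mem_divisors]

theorem sum_Icc_ramanujanSum_div_rpow (q x : ℕ) (s : ℝ) :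
    ∑ n ∈ Icc 1 x, (ramanujanSum q n : ℝ) / (n : ℝ) ^ s =
      ∑ d ∈ q.divisors, (d : ℝ) ^ (1 - s) * ArithmeticFunction.moebius (q / d) *
        ∑ m ∈ Icc 1 (x / d), 1 / (m : ℝ) ^ s := by
  simp_rw [ramanujanSum_eq_sum_divisors_filter_dvd, Int.cast_sum, sum_div, sum_filter]
  rw [sum_comm]
  refine sum_congr rfl fun d hd => ?_
  have hd0 : 0 < d := Nat.pos_of_mem_divisors hd
  have hd0' : (0 : ℝ) < d := by exact_mod_cast hd0
  rw [← sum_filter, Nat.sum_Icc_filter_dvd _ hd0.ne', mul_sum]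
  refine sum_congr rfl fun m _ => ?_
  push_cast
  rw [Real.mul_rpow hd0'.le m.cast_nonneg, Real.rpow_sub hd0', Real.rpow_one]
  field_simp

theorem dual_rf_series_sigma_general (s : ℝ) (hs : 1 < s) (q : ℕ) :
    Tendsto (fun x : ℕ => ∑ n ∈ Finset.Icc 1 x, (ramanujanSum q n : ℝ) / (n : ℝ) ^ s) atTop
      (𝓝 ((∑' m : ℕ+, 1 / (m : ℝ) ^ s) *
        ∑ d ∈ q.divisors, (d : ℝ) ^ (1 - s) * ArithmeticFunction.moebius (q / d))) := by
  have hzeta : Tendsto (fun x : ℕ => ∑ m ∈ Icc 1 x, 1 / (m : ℝ) ^ s) atTop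
      (𝓝 (∑' m : ℕ+, 1 / (m : ℝ) ^ s)) :=
    tendsto_sum_Icc_one_tsum_pnat <|
      summable_pnat_iff_summable_nat.mpr (Real.summable_one_div_nat_rpow.mpr hs)
  simp_rw [sum_Icc_ramanujanSum_div_rpow]
  rw [mul_comm, sum_mul]
  refine tendsto_finsetSum _ fun d hd => ?_
  exact (hzeta.comp (Nat.tendsto_div_const_atTop (Nat.pos_of_mem_divisors hd).ne')).const_mul _

theorem dual_rf_series_sigma (s : ℝ) (hs : 1 < s) (q : ℕ) (hq : 0 < q) :
    Tendsto (fun x : ℕ => ∑ n ∈ Finset.Icc 1 x, (ramanujanSum q n : ℝ) / (n : ℝ) ^ s) atTop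
      (𝓝 ((∑' m : ℕ+, 1 / (m : ℝ) ^ s) *
        ∑ d ∈ q.divisors, (d : ℝ) ^ (1 - s) * ArithmeticFunction.moebius (q / d))) :=
  dual_rf_series_sigma_general s hs q
end

section
/- Let f : ℕ → ℂ be an arithmetic function satisfying Σ_{q=1}^∞ |(f*1)(q)|·τ(q)/q < ∞, where 1 is the constant-one function and τ the divisor-counting function. Then for every positive integer q, f(q) = Σ_{n=1}^∞ a(n)·c_q(n), where a(n) = Σ_{m=1}^∞ (f*1)(nm)·μ(m)/(nm), all series being convergent. -/
open Finset Filter Topology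

/-!
Write `g = f * 1`. For `d ≥ 1` the double series `∑_{k,m ≥ 1} g(dkm) μ(m) / (dkm)` converges
absolutely: grouping the terms with `km = r` bounds it by `∑_r τ(dr) |g(dr)| / (dr)`, a subseries
of the hypothesis. Grouped that way it equals `∑_r g(dr)/(dr) ∑_{m ∣ r} μ(m) = g(d)/d`, while
summing over `m` first gives `∑_k a(dk)`. Since `c_q(n) = ∑_{e ∣ q, e ∣ n} μ(q/e) e`, the series
`∑_n a(n) c_q(n)` splits into finitely many series over the multiples of the divisors `e` of `q`,
and its value is `∑_{e ∣ q} μ(q/e) g(e) = f(q)` by Möbius inversion.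
-/

open ArithmeticFunction
open scoped ArithmeticFunction.Moebius

lemma sum_divisors_moebius_eq_ite {R : Type*} [Ring R] (n : ℕ) :
    ∑ d ∈ n.divisors, (μ d : R) = if n = 1 then 1 else 0 := by
  rw [← one_apply, ← coe_moebius_mul_coe_zeta, coe_mul_zeta_apply]
  simp only [intCoe_apply]

section MoebiusDoubleSeries

variable {h : ℕ → ℂ}

lemma comp_mul_mul_moebius_sigmaAntidiagonalEquivProd (n : ℕ+)
    (x : (n : ℕ).divisorsAntidiagonal) :
    ((fun p : ℕ+ × ℕ+ => h (p.1 * p.2) * μ p.2) ∘ sigmaAntidiagonalEquivProd) ⟨n, x⟩ =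
      h n * μ x.1.2 := by
  change h ((divisorsAntidiagonalFactors n x).1.1 * (divisorsAntidiagonalFactors n x).2.1) * _ = _
  rw [divisorsAntidiagonalFactors_eq]
  rfl

lemma summable_comp_mul_mul_moebius
    (hh : Summable fun n : ℕ+ => ‖h n‖ * (n : ℕ).divisors.card) :
    Summable fun p : ℕ+ × ℕ+ => h (p.1 * p.2) * μ p.2 := by
  rw [← sigmaAntidiagonalEquivProd.summable_iff]
  refine .of_norm <| (summable_sigma_of_nonneg fun _ => norm_nonneg _).mpr
    ⟨fun _ => .of_finite, hh.of_nonneg_of_le (fun _ => tsum_nonneg fun _ => norm_nonneg _)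
      fun n => ?_⟩
  simp only [tsum_fintype, comp_mul_mul_moebius_sigmaAntidiagonalEquivProd, norm_mul]
  calc ∑ x : (n : ℕ).divisorsAntidiagonal, ‖h n‖ * ‖(μ x.1.2 : ℂ)‖
      = ∑ d ∈ (n : ℕ).divisors, ‖h n‖ * |(μ d : ℝ)| := by
        rw [Finset.sum_coe_sort _ (fun x : ℕ × ℕ => ‖h n‖ * ‖(μ x.2 : ℂ)‖),
          Nat.sum_divisorsAntidiagonal' (fun _ d => ‖h n‖ * ‖(μ d : ℂ)‖)]
        simp only [Complex.norm_intCast]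
    _ ≤ ∑ d ∈ (n : ℕ).divisors, ‖h n‖ := by
        gcongr with d
        exact mul_le_of_le_one_right (norm_nonneg _) (mod_cast abs_moebius_le_one)
    _ = ‖h n‖ * (n : ℕ).divisors.card := by rw [sum_const, nsmul_eq_mul, mul_comm]

lemma hasSum_comp_mul_mul_moebius
    (hh : Summable fun n : ℕ+ => ‖h n‖ * (n : ℕ).divisors.card) :
    HasSum (fun p : ℕ+ × ℕ+ => h (p.1 * p.2) * μ p.2) (h 1) := by
  have hfiber (n : ℕ+) : ∑ x : (n : ℕ).divisorsAntidiagonal,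
      ((fun p : ℕ+ × ℕ+ => h (p.1 * p.2) * μ p.2) ∘ sigmaAntidiagonalEquivProd) ⟨n, x⟩ =
        if n = 1 then h 1 else 0 := by
    simp only [comp_mul_mul_moebius_sigmaAntidiagonalEquivProd]
    rw [Finset.sum_coe_sort _ (fun x : ℕ × ℕ => h n * μ x.2),
      Nat.sum_divisorsAntidiagonal' (fun _ d => h n * μ d), ← mul_sum,
      sum_divisors_moebius_eq_ite]
    obtain rfl | hn := eq_or_ne n 1 <;> simp [*]
  have hsum := summable_comp_mul_mul_moebius hh
  have hsigma := (sigmaAntidiagonalEquivProd.summable_iff.mpr hsum).hasSum.sigma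
    fun n => hasSum_fintype _
  simp only [hfiber] at hsigma
  have hval : ∑' p : ℕ+ × ℕ+, h (p.1 * p.2) * μ p.2 = h 1 :=
    (sigmaAntidiagonalEquivProd.tsum_eq _).symm.trans (hsigma.unique (hasSum_ite_eq 1 (h 1)))
  exact hval ▸ hsum.hasSum

end MoebiusDoubleSeries

noncomputable def delangeCoeff (g : ℕ → ℂ) (n : ℕ) : ℂ :=
  ∑' m : ℕ+, g (n * (m : ℕ)) * μ m / (n * (m : ℕ))

section DelangeCoeff

variable {g : ℕ → ℂ}

lemma summable_norm_comp_mul_div_mul_card_divisors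
    (hg : Summable fun n : ℕ+ => ‖g n‖ * (n : ℕ).divisors.card / (n : ℕ)) (d : ℕ+) :
    Summable fun n : ℕ+ => ‖g (d * n) / (d * n : ℂ)‖ * (n : ℕ).divisors.card := by
  refine (hg.comp_injective (mul_right_injective d)).of_nonneg_of_le (fun _ => by positivity)
    fun n => ?_
  rw [norm_div, div_mul_eq_mul_div, Function.comp_apply, PNat.mul_coe]
  push_cast
  rw [norm_mul, Complex.norm_natCast, Complex.norm_natCast]
  gcongr
  exact dvd_mul_left _ _

lemma hasSum_delangeCoeff_mul
    (hg : Summable fun n : ℕ+ => ‖g n‖ * (n : ℕ).divisors.card / (n : ℕ)) (d : ℕ+) :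
    HasSum (fun k : ℕ+ => delangeCoeff g (d * k)) (g d / d) := by
  have H := hasSum_comp_mul_mul_moebius (h := fun r : ℕ => g (d * r) / (d * r))
    (summable_norm_comp_mul_div_mul_card_divisors hg d)
  simp only [Nat.cast_one, mul_one] at H
  refine H.prod_fiberwise fun k => ?_
  have hcoeff : delangeCoeff g (d * k) =
      ∑' m : ℕ+, g (d * (k * m)) / (d * ((k * m : ℕ) : ℂ)) * μ m := by
    refine tsum_congr fun m => ?_
    rw [← mul_assoc]
    push_cast
    ring
  rw [hcoeff]
  exact (H.summable.prod_factor k).hasSum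

lemma summable_delangeCoeff_terms
    (hg : Summable fun n : ℕ+ => ‖g n‖ * (n : ℕ).divisors.card / (n : ℕ)) (n : ℕ+) :
    Summable fun m : ℕ+ => g (n * (m : ℕ)) * μ m / (n * (m : ℕ)) := by
  refine ((summable_comp_mul_mul_moebius (h := fun r : ℕ => g (n * r) / (n * r))
    (summable_norm_comp_mul_div_mul_card_divisors hg n)).prod_factor 1).congr fun m => ?_
  simp only [PNat.one_coe, one_mul]
  ring

end DelangeCoeff

lemma hasSum_pnat_ite_dvd_iff {M : Type*} [AddCommMonoid M] [TopologicalSpace M]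
    {u : ℕ → M} {s : M} (e : ℕ+) :
    HasSum (fun n : ℕ+ => if (e : ℕ) ∣ n then u n else 0) s ↔
      HasSum (fun k : ℕ+ => u (e * k)) s := by
  rw [← (mul_right_injective e).hasSum_iff]
  · simp [Function.comp_def]
  · rintro n hn
    rw [if_neg]
    rintro ⟨k, hk⟩
    have hk0 : 0 < k := Nat.pos_of_mul_pos_left (hk ▸ n.pos)
    exact hn ⟨⟨k, hk0⟩, PNat.eq hk.symm⟩

lemma ramanujanSum_eq_sum_divisors {q : ℕ} (hq : q ≠ 0) (n : ℕ) :
    ramanujanSum q n = ∑ e ∈ q.divisors, if e ∣ n then μ (q / e) * (e : ℤ) else 0 := by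
  rw [ramanujanSum, ← Nat.divisors_filter_dvd_of_dvd hq (Nat.gcd_dvd_left q n), sum_filter]
  refine sum_congr rfl fun e he => ?_
  exact if_congr (Nat.dvd_gcd_iff.trans (and_iff_right (Nat.dvd_of_mem_divisors he))) rfl rfl

lemma hasSum_delangeCoeff_mul_ramanujanSum (f : ℕ → ℂ)
    (hf : Summable fun n : ℕ+ =>
      ‖∑ d ∈ (n : ℕ).divisors, f d‖ * (n : ℕ).divisors.card / (n : ℕ))
    {q : ℕ} (hq : 0 < q) :
    HasSum (fun n : ℕ+ =>
      delangeCoeff (fun k => ∑ d ∈ k.divisors, f d) n * ramanujanSum q n) (f q) := by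
  set g : ℕ → ℂ := fun k => ∑ d ∈ k.divisors, f d
  have hinversion : ∑ e ∈ q.divisors, (μ (q / e) : ℂ) * g e = f q := by
    rw [← Nat.sum_divisorsAntidiagonal' (fun a b => (μ a : ℂ) * g b)]
    exact sum_eq_iff_sum_mul_moebius_eq.mp (fun _ _ => rfl) q hq
  have hterm : ∀ e ∈ q.divisors, HasSum (fun n : ℕ+ =>
      if e ∣ n then delangeCoeff g n * (μ (q / e) * e) else 0) (μ (q / e) * g e) := by
    intro e he
    have he0 : 0 < e := Nat.pos_of_mem_divisors he
    refine (hasSum_pnat_ite_dvd_iff (u := fun n => delangeCoeff g n * (μ (q / e) * e))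
      ⟨e, he0⟩).mpr ?_
    have hval : (μ (q / e) : ℂ) * g e = g e / e * (μ (q / e) * e) := by
      field_simp [he0.ne']
    rw [hval]
    exact (hasSum_delangeCoeff_mul (g := g) hf ⟨e, he0⟩).mul_right _
  rw [← hinversion]
  convert hasSum_sum hterm with n
  rw [ramanujanSum_eq_sum_divisors hq.ne', Int.cast_sum, mul_sum]
  refine sum_congr rfl fun e _ => ?_
  split_ifs <;> simp

lemma HasSum.tendsto_sum_Icc_one {M : Type*} [AddCommMonoid M] [TopologicalSpace M]
    {u : ℕ → M} {s : M} (h : HasSum (fun n : ℕ+ => u n) s) :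
    Tendsto (fun x => ∑ n ∈ Icc 1 x, u n) atTop (𝓝 s) := by
  simpa [← Ico_add_one_right_eq_Icc, sum_Ico_eq_sum_range, add_comm]
    using (hasSum_pnat_iff_hasSum_succ.mp h).tendsto_sum_nat

theorem dual_delange (f : ℕ → ℂ)
    (hf : Summable (fun n : ℕ+ =>
      ‖∑ d ∈ (n : ℕ).divisors, f d‖ * (n : ℕ).divisors.card / (n : ℕ))) :
    (∀ n : ℕ, 0 < n → Summable (fun m : ℕ+ =>
        (∑ d ∈ (n * (m : ℕ)).divisors, f d) * (ArithmeticFunction.moebius (m : ℕ) : ℂ) /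
          (n * (m : ℕ)))) ∧
    ∀ q : ℕ, 0 < q →
      Tendsto (fun x : ℕ => ∑ n ∈ Finset.Icc 1 x,
          (∑' m : ℕ+, (∑ d ∈ (n * (m : ℕ)).divisors, f d) *
            (ArithmeticFunction.moebius (m : ℕ) : ℂ) / (n * (m : ℕ))) *
          (ramanujanSum q n : ℂ)) atTop (𝓝 (f q)) :=
  ⟨fun n hn => summable_delangeCoeff_terms (g := fun k => ∑ d ∈ k.divisors, f d) hf ⟨n, hn⟩,
    fun _ hq => (hasSum_delangeCoeff_mul_ramanujanSum f hf hq).tendsto_sum_Icc_one⟩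
end

section
/- Let a : ℕ×ℕ → ℂ be such that for all positive integers q1, q2 the series A(q1,q2) := q1·q2·Σ_{k1,k2=1}^∞ a(k1 q1, k2 q2) converges. Then for all q1, q2, Σ_{n1,n2=1}^∞ a(n1,n2)·c_{q1}(n1)·c_{q2}(n2) converges and equals Σ_{d1|q1, d2|q2} μ(q1/d1)·μ(q2/d2)·A(d1,d2). -/
open Finset Filter Topology

/-!
Writing `c_q(n) = ∑_{d ∣ q, d ∣ n} μ(q/d) d` and exchanging finite sums, the rectangular partial
sum of the dual series up to `(x, y)` becomes
`∑_{d₁ ∣ q₁, d₂ ∣ q₂} μ(q₁/d₁) μ(q₂/d₂) · d₁ d₂ ∑_{k₁ ≤ x/d₁, k₂ ≤ y/d₂} a(k₁ d₁, k₂ d₂)`,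
a finite combination of partial sums of the series defining `A(d₁, d₂)`, truncated at
`(⌊x/d₁⌋, ⌊y/d₂⌋)`. Since that truncation tends to infinity with `(x, y)`, each term converges.
-/

open scoped ArithmeticFunction.Moebius

theorem Nat.Icc_filter_dvd_eq_map {d : ℕ} (hd : d ≠ 0) (x : ℕ) :
    {n ∈ Icc 1 x | d ∣ n} = (Icc 1 (x / d)).map ⟨(· * d), mul_left_injective₀ hd⟩ := by
  ext n
  simp only [mem_filter, mem_Icc, Finset.mem_map, Function.Embedding.coeFn_mk,
    dvd_iff_exists_eq_mul_left, Nat.le_div_iff_mul_le (Nat.pos_of_ne_zero hd)]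
  constructor
  · rintro ⟨⟨hpos, hle⟩, k, rfl⟩
    exact ⟨k, ⟨Nat.pos_of_ne_zero (by rintro rfl; simp at hpos), hle⟩, rfl⟩
  · rintro ⟨k, ⟨hk, hle⟩, rfl⟩
    exact ⟨⟨Nat.one_le_iff_ne_zero.2 (mul_ne_zero (by omega) hd), hle⟩, k, rfl⟩

theorem ramanujanSum_eq_sum_filter_dvd (q n : ℕ) :
    ramanujanSum q n = ∑ d ∈ q.divisors with d ∣ n, μ (q / d) * d := by
  rcases eq_or_ne q 0 with rfl | hq
  · -- both sides vanish: `μ 0 = 0` and `Nat.divisors 0 = ∅`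
    simp [ramanujanSum]
  rw [ramanujanSum]
  refine sum_congr ?_ fun _ _ => rfl
  ext d
  simp [Nat.dvd_gcd_iff, hq]

theorem sum_Icc_mul_ramanujanSum {R : Type*} [CommRing R] (f : ℕ → R) (q x : ℕ) :
    ∑ n ∈ Icc 1 x, f n * ramanujanSum q n =
      ∑ d ∈ q.divisors, (μ (q / d) * d : R) * ∑ k ∈ Icc 1 (x / d), f (k * d) := by
  calc ∑ n ∈ Icc 1 x, f n * ramanujanSum q n
      = ∑ d ∈ q.divisors, ∑ n ∈ Icc 1 x with d ∣ n, (μ (q / d) * d : R) * f n := by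
        simp_rw [ramanujanSum_eq_sum_filter_dvd, sum_filter, Int.cast_sum, mul_sum]
        rw [sum_comm]
        refine sum_congr rfl fun d _ => sum_congr rfl fun n _ => ?_
        split_ifs <;> push_cast <;> ring
    _ = _ := by
        refine sum_congr rfl fun d hd => ?_
        rw [Nat.Icc_filter_dvd_eq_map (Nat.ne_of_gt (Nat.pos_of_mem_divisors hd)), sum_map,
          mul_sum]
        rfl

theorem sum_Icc_sum_Icc_mul_ramanujanSum_mul_ramanujanSum {R : Type*} [CommRing R]
    (a : ℕ → ℕ → R) (q₁ q₂ x y : ℕ) :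
    ∑ n₁ ∈ Icc 1 x, ∑ n₂ ∈ Icc 1 y, a n₁ n₂ * ramanujanSum q₁ n₁ * ramanujanSum q₂ n₂ =
      ∑ d₁ ∈ q₁.divisors, ∑ d₂ ∈ q₂.divisors, (μ (q₁ / d₁) * μ (q₂ / d₂) : R) *
        ((d₁ : R) * d₂ * ∑ k₁ ∈ Icc 1 (x / d₁), ∑ k₂ ∈ Icc 1 (y / d₂), a (k₁ * d₁) (k₂ * d₂)) := by
  calc ∑ n₁ ∈ Icc 1 x, ∑ n₂ ∈ Icc 1 y, a n₁ n₂ * ramanujanSum q₁ n₁ * ramanujanSum q₂ n₂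
      = ∑ n₁ ∈ Icc 1 x, (∑ n₂ ∈ Icc 1 y, a n₁ n₂ * ramanujanSum q₂ n₂) * ramanujanSum q₁ n₁ := by
        simp_rw [sum_mul, mul_right_comm]
    _ = ∑ d₁ ∈ q₁.divisors, (μ (q₁ / d₁) * d₁ : R) *
          ∑ n₂ ∈ Icc 1 y, (∑ k₁ ∈ Icc 1 (x / d₁), a (k₁ * d₁) n₂) * ramanujanSum q₂ n₂ := by
        simp_rw [sum_Icc_mul_ramanujanSum _ q₁, sum_mul]
        exact sum_congr rfl fun d₁ _ => congrArg _ sum_comm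
    _ = _ := by
        refine sum_congr rfl fun d₁ _ => ?_
        rw [sum_Icc_mul_ramanujanSum _ q₂, mul_sum]
        refine sum_congr rfl fun d₂ _ => ?_
        rw [sum_comm]
        ring

theorem dual_lucht_two_variables_general (a A : ℕ → ℕ → ℂ)
    (hA : ∀ q₁ q₂ : ℕ, 0 < q₁ → 0 < q₂ →
      Tendsto (fun xy : ℕ × ℕ => (q₁ : ℂ) * (q₂ : ℂ) *
          ∑ k₁ ∈ Finset.Icc 1 xy.1, ∑ k₂ ∈ Finset.Icc 1 xy.2, a (k₁ * q₁) (k₂ * q₂))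
        atTop (𝓝 (A q₁ q₂)))
    (q₁ q₂ : ℕ) :
    Tendsto (fun xy : ℕ × ℕ =>
        ∑ n₁ ∈ Finset.Icc 1 xy.1, ∑ n₂ ∈ Finset.Icc 1 xy.2,
          a n₁ n₂ * (ramanujanSum q₁ n₁ : ℂ) * (ramanujanSum q₂ n₂ : ℂ))
      atTop
      (𝓝 (∑ d₁ ∈ q₁.divisors, ∑ d₂ ∈ q₂.divisors,
        (ArithmeticFunction.moebius (q₁ / d₁) : ℂ) * (ArithmeticFunction.moebius (q₂ / d₂) : ℂ) *
          A d₁ d₂)) := by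
  simp_rw [sum_Icc_sum_Icc_mul_ramanujanSum_mul_ramanujanSum]
  refine tendsto_finsetSum _ fun d₁ hd₁ => tendsto_finsetSum _ fun d₂ hd₂ => ?_
  have hd₁ : 0 < d₁ := Nat.pos_of_mem_divisors hd₁
  have hd₂ : 0 < d₂ := Nat.pos_of_mem_divisors hd₂
  have h_div : Tendsto (fun xy : ℕ × ℕ => (xy.1 / d₁, xy.2 / d₂)) atTop atTop := by
    rw [← prod_atTop_atTop_eq]
    exact (Nat.tendsto_div_const_atTop hd₁.ne').prodMap (Nat.tendsto_div_const_atTop hd₂.ne')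
  exact ((hA d₁ d₂ hd₁ hd₂).comp h_div).const_mul _

theorem dual_lucht_two_variables (a A : ℕ → ℕ → ℂ)
    (hA : ∀ q₁ q₂ : ℕ, 0 < q₁ → 0 < q₂ →
      Tendsto (fun xy : ℕ × ℕ => (q₁ : ℂ) * (q₂ : ℂ) *
          ∑ k₁ ∈ Finset.Icc 1 xy.1, ∑ k₂ ∈ Finset.Icc 1 xy.2, a (k₁ * q₁) (k₂ * q₂))
        atTop (𝓝 (A q₁ q₂)))
    (q₁ q₂ : ℕ) (hq₁ : 0 < q₁) (hq₂ : 0 < q₂) :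
    Tendsto (fun xy : ℕ × ℕ =>
        ∑ n₁ ∈ Finset.Icc 1 xy.1, ∑ n₂ ∈ Finset.Icc 1 xy.2,
          a n₁ n₂ * (ramanujanSum q₁ n₁ : ℂ) * (ramanujanSum q₂ n₂ : ℂ))
      atTop
      (𝓝 (∑ d₁ ∈ q₁.divisors, ∑ d₂ ∈ q₂.divisors,
        (ArithmeticFunction.moebius (q₁ / d₁) : ℂ) * (ArithmeticFunction.moebius (q₂ / d₂) : ℂ) *
          A d₁ d₂)) :=
  dual_lucht_two_variables_general a A hA q₁ q₂
end
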